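/- arXiv:2403.10530 — 2 statements merged into one kernel-verified Lean document; each statement's English description precedes it below -/
import Mathlib

section
/- The sequence ρ_{b,i} = π(i² + i) / (2(√3 i² − (√3 − 6) i + (13√3/4 − 3))) is strictly increasing for i ≥ 2. -/
/-! `ρ_{b,i} = (π/2) · i(i+1) / (a i² + b i + c)` with `a = √3 ≤ b = 6 - √3` and
`c = 13√3/4 - 3 > 0`. For any such coefficients the ratio increases in `i`: after
cross-multiplying, the difference is `(i + 1)((b - a) i + 2c) > 0`. -/

open Real

noncomputable def rhoB (i : ℕ) : ℝ :=
  π * ((i : ℝ) ^ 2 + i) /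
    (2 * (Real.sqrt 3 * (i : ℝ) ^ 2 - (Real.sqrt 3 - 6) * i + (13 * Real.sqrt 3 / 4 - 3)))

theorem mul_succ_div_quadratic_lt_succ {a b c x : ℝ} (hx : 0 ≤ x) (ha : 0 ≤ a) (hab : a ≤ b)
    (hc : 0 < c) :
    x * (x + 1) / (a * x ^ 2 + b * x + c) <
      (x + 1) * (x + 1 + 1) / (a * (x + 1) ^ 2 + b * (x + 1) + c) := by
  have hb : 0 ≤ b := ha.trans hab
  have hg : 0 < a * x ^ 2 + b * x + c := by positivity
  have hg' : 0 < a * (x + 1) ^ 2 + b * (x + 1) + c := by positivity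
  rw [div_lt_div_iff₀ hg hg', ← sub_pos]
  have cross_diff : (x + 1) * (x + 1 + 1) * (a * x ^ 2 + b * x + c)
      - x * (x + 1) * (a * (x + 1) ^ 2 + b * (x + 1) + c) = (x + 1) * ((b - a) * x + 2 * c) := by
    ring
  rw [cross_diff]
  have : 0 ≤ (b - a) * x := mul_nonneg (sub_nonneg.mpr hab) hx
  positivity

theorem rhoB_eq (i : ℕ) :
    rhoB i = π / 2 * ((i : ℝ) * (i + 1) /
      (√3 * (i : ℝ) ^ 2 + (6 - √3) * i + (13 * √3 / 4 - 3))) := by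
  rw [rhoB, div_mul_div_comm]
  ring_nf

theorem stmt_8 : ∀ i : ℕ, 2 ≤ i → rhoB i < rhoB (i + 1) := by
  intro i _
  have hs : 1 < √3 := by rw [Real.lt_sqrt zero_le_one]; norm_num
  have hs' : √3 < 3 := by rw [Real.sqrt_lt' three_pos]; norm_num
  rw [rhoB_eq, rhoB_eq, Nat.cast_succ]
  refine mul_lt_mul_of_pos_left ?_ (by positivity)
  exact mul_succ_div_quadratic_lt_succ (Nat.cast_nonneg i) (by positivity) (by linarith)
    (by linarith)
end

section
/- For every integer i ≥ 2, the hexagonal packing density inside a hexagon exceeds the triangular packing density inside a triangle: ρ_{d,i} > ρ_{b,i}. -/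
/-! After rewriting the hexagon's area as `6√3 i² + 12 i + 2√3`, cross-multiplying turns
`ρ_b < ρ_d` into positivity of the cubic `(24 - 6√3) i³ + (6 + 27√3/2) i² + (31√3/2 - 6) i + (13√3/2 - 6)`,
all of whose coefficients are positive because `1 < √3 < 2`. So the inequality holds for every `i`. -/

open Real

noncomputable def rhoD (i : ℕ) : ℝ :=
  π * (3 * (i : ℝ) ^ 2 + 3 * i + 1) /
    ((3 * Real.sqrt 3 / 2) * (2 * (i : ℝ) + 2 / Real.sqrt 3) ^ 2)

theorem one_lt_sqrt_three : 1 < √3 := by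
  rw [Real.lt_sqrt zero_le_one]
  norm_num

theorem sqrt_three_lt_two : √3 < 2 := by
  rw [Real.sqrt_lt' two_pos]
  norm_num

theorem hexagon_area_eq (x : ℝ) :
    3 * √3 / 2 * (2 * x + 2 / √3) ^ 2 = 6 * √3 * x ^ 2 + 12 * x + 2 * √3 := by
  have hs : √3 ≠ 0 := by positivity
  field_simp
  linear_combination (-2) * Real.sq_sqrt zero_le_three

theorem rhoB_denom_pos {x : ℝ} (hx : 0 ≤ x) :
    0 < 2 * (√3 * x ^ 2 - (√3 - 6) * x + (13 * √3 / 4 - 3)) := by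
  have h1 := one_lt_sqrt_three
  have h2 := sqrt_three_lt_two
  have : 0 ≤ (6 - √3) * x := mul_nonneg (by linarith) hx
  nlinarith [mul_nonneg (sqrt_nonneg 3) (sq_nonneg x)]

theorem rhoD_rhoB_cross_mul_sub_eq (s x : ℝ) :
    (3 * x ^ 2 + 3 * x + 1) * (2 * (s * x ^ 2 - (s - 6) * x + (13 * s / 4 - 3)))
      - (x ^ 2 + x) * (6 * s * x ^ 2 + 12 * x + 2 * s)
      = (24 - 6 * s) * x ^ 3 + (6 + 27 * s / 2) * x ^ 2 + (31 * s / 2 - 6) * x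
        + (13 * s / 2 - 6) := by
  ring

theorem rhoD_rhoB_cubic_pos {s x : ℝ} (hs₁ : 12 / 13 < s) (hs₂ : s < 4) (hx : 0 ≤ x) :
    0 < (24 - 6 * s) * x ^ 3 + (6 + 27 * s / 2) * x ^ 2 + (31 * s / 2 - 6) * x
        + (13 * s / 2 - 6) := by
  have h₃ : 0 ≤ (24 - 6 * s) * x ^ 3 := mul_nonneg (by linarith) (by positivity)
  have h₂ : 0 ≤ (6 + 27 * s / 2) * x ^ 2 := mul_nonneg (by linarith) (by positivity)
  have h₁ : 0 ≤ (31 * s / 2 - 6) * x := mul_nonneg (by linarith) hx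
  linarith

theorem rhoB_lt_rhoD (i : ℕ) : rhoB i < rhoD i := by
  have hx : (0 : ℝ) ≤ i := i.cast_nonneg
  have hs₁ := one_lt_sqrt_three
  have hs₂ := sqrt_three_lt_two
  have hD : 0 < 6 * √3 * (i : ℝ) ^ 2 + 12 * i + 2 * √3 := by positivity
  rw [rhoB, rhoD, hexagon_area_eq, div_lt_div_iff₀ (rhoB_denom_pos hx) hD, mul_assoc π,
    mul_assoc π, mul_lt_mul_iff_right₀ pi_pos, ← sub_pos, rhoD_rhoB_cross_mul_sub_eq]
  exact rhoD_rhoB_cubic_pos (by linarith) (by linarith) hx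

theorem stmt_16 : ∀ i : ℕ, 2 ≤ i → rhoD i > rhoB i :=
  fun i _ => rhoB_lt_rhoD i
end
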